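/- arXiv:2308.10143 — 3 statements merged into one kernel-verified Lean document; each statement's English description precedes it below -/
import Mathlib

section
/- Let A be a unique factorization domain with a ring involution σ : A → A (σ ∘ σ = id), let F be the fraction field of A, and extend σ to a field involution of F. If u is a unit of A and there exists x ∈ Fˣ with u = x · σ(x), then there exists a unit a ∈ Aˣ with u = a · σ(a). In other words, the natural map Aˣ/{ a·σ(a) : a ∈ Aˣ } → Fˣ/{ x·σ(x) : x ∈ Fˣ } induced by the inclusion A ↪ F is injective. -/
/-- Let `A` be a UFD with ring involution `σ`, with fraction field `F`, and let `τ` be the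
field involution of `F` extending `σ`. If a unit `u` of `A` is of the form `x · τ x` for
some nonzero `x ∈ F`, then `u = a · σ a` for some unit `a` of `A`. -/
theorem stmt_3 {A : Type*} [CommRing A] [IsDomain A] [UniqueFactorizationMonoid A]
    {F : Type*} [Field F] [Algebra A F] [IsFractionRing A F]
    (σ : A →+* A) (hσ : ∀ a, σ (σ a) = a)
    (τ : F →+* F) (hτ : ∀ x, τ (τ x) = x)
    (hcompat : ∀ a : A, τ (algebraMap A F a) = algebraMap A F (σ a))
    (u : Aˣ) (x : F) (hx : x ≠ 0)
    (h : algebraMap A F (u : A) = x * τ x) :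
    ∃ a : Aˣ, (u : A) = a * σ a := by
  obtain ⟨a, b, hrel, rfl⟩ := IsFractionRing.exists_reduced_fraction A x
  have hinj : Function.Injective (algebraMap A F) := IsFractionRing.injective A F
  have hb0 : (b : A) ≠ 0 := nonZeroDivisors.coe_ne_zero b
  have hbF : algebraMap A F (b : A) ≠ 0 :=
    fun hc => hb0 (hinj (by rw [hc, map_zero]))
  have hσinj : Function.Injective σ := Function.LeftInverse.injective hσ
  have hσb : σ (b : A) ≠ 0 := fun hc => hb0 (hσinj (by rw [hc, map_zero]))
  have hσbF : algebraMap A F (σ (b : A)) ≠ 0 :=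
    fun hc => hσb (hinj (by rw [hc, map_zero]))
  -- key equation in A : u * b * σ b = a * σ a
  have key : (u : A) * b * σ b = a * σ a := by
    apply hinj
    rw [show IsLocalization.mk' F a b = algebraMap A F a / algebraMap A F (b : A) from
      IsFractionRing.mk'_eq_div b] at h
    have hτmk : τ (algebraMap A F a / algebraMap A F (b : A))
        = algebraMap A F (σ a) / algebraMap A F (σ (b : A)) := by
      rw [map_div₀, hcompat, hcompat]
    rw [hτmk] at h
    push_cast [map_mul]
    field_simp at h
    linear_combination h
  -- b divides σ a
  have hdvd : (b : A) ∣ σ a := by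
    have h1 : (b : A) ∣ a * σ a := ⟨(u : A) * σ b, by rw [← key]; ring⟩
    exact hrel.symm.dvd_of_dvd_mul_left h1
  obtain ⟨e, he⟩ := hdvd
  have ha : a = σ (b : A) * σ e := by
    have := congrArg σ he
    rw [hσ, map_mul] at this
    exact this
  have hA : a * σ a = (b : A) * σ (b : A) * (e * σ e) := by
    rw [ha, map_mul, hσ, hσ]; ring
  have hkey2 : (b : A) * σ (b : A) * (u : A) = (b : A) * σ (b : A) * (e * σ e) := by
    linear_combination key + hA
  have hbb : (b : A) * σ (b : A) ≠ 0 := mul_ne_zero hb0 hσb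
  have hue : (u : A) = e * σ e := mul_left_cancel₀ hbb hkey2
  have hunit : IsUnit e := isUnit_of_mul_isUnit_left (hue ▸ u.isUnit)
  obtain ⟨a', rfl⟩ := hunit
  exact ⟨a', hue⟩
end

section
/- Let F = ℚ(t) be the field of rational functions in one variable over ℚ, and let σ be a field automorphism of F with σ(t) = t⁻¹ (and σ the identity on ℚ). Then for every f ∈ Fˣ one has f · σ(f) ≠ −1; that is, −1 does not belong to the subgroup N(F) = { f·σ(f) : f ∈ Fˣ }, so the class of −1 is a nontrivial element of order 2 in Fˣ/N(F). -/
/-!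
Write `f = p / q` in lowest terms. Since `σ p = p.reverse / X ^ p.natDegree`, clearing
denominators in `f * σ f = -1` gives
`p * p.reverse * X ^ q.natDegree = -(q * q.reverse * X ^ p.natDegree)` in `ℚ[X]`. Evaluate at
`1`, the fixed point of `t ↦ t⁻¹`, where `p.reverse` and `p` agree:
`p(1)² = -q(1)²`. As `-1` is not a square in `ℚ`, `p(1) = q(1) = 0`, contradicting coprimality.
-/

open Polynomial

theorem Polynomial.eval_one_reverse {R : Type*} [CommSemiring R] (p : R[X]) :
    p.reverse.eval 1 = p.eval 1 := by
  let := invertibleOne (α := R)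
  simpa using eval₂_reverse_mul_pow (RingHom.id R) 1 p

theorem eq_zero_of_sq_eq_neg_sq {K : Type*} [Field K] (hK : ¬IsSquare (-1 : K)) {a b : K}
    (h : a ^ 2 = -b ^ 2) : b = 0 := by
  by_contra hb
  exact hK ⟨a / b, by field_simp; linear_combination -h⟩

namespace RatFunc

variable {K : Type*} [Field K]

theorem aeval_X (p : K[X]) : aeval (X : RatFunc K) p = algebraMap K[X] (RatFunc K) p := by
  rw [← algebraMap_X, aeval_algebraMap_apply, aeval_X_left_apply]

variable {F : Type*} [FunLike F (RatFunc K) (RatFunc K)] [RingHomClass F (RatFunc K) (RatFunc K)]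
  {σ : F}

theorem map_algebraMap_of_map_C (hσC : ∀ r, σ (C r) = C r)
    (p : K[X]) : σ (algebraMap K[X] (RatFunc K) p) = aeval (σ X) p := by
  have hσK : (σ : RatFunc K →+* RatFunc K).comp C = C := RingHom.ext hσC
  rw [← aeval_X, aeval_def, aeval_def, algebraMap_eq_C]
  simpa only [hσK, RingHom.coe_coe] using hom_eval₂ p C (σ : RatFunc K →+* RatFunc K) X

theorem aeval_X_inv_mul_X_pow_natDegree (p : K[X]) :
    aeval (X : RatFunc K)⁻¹ p * X ^ p.natDegree = algebraMap K[X] (RatFunc K) p.reverse := by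
  let := invertibleOfNonzero (inv_ne_zero (X_ne_zero (K := K)))
  have h := eval₂_reverse_mul_pow (algebraMap K (RatFunc K)) (X : RatFunc K)⁻¹ p
  rw [invOf_eq_inv, inv_inv, ← aeval_def, ← aeval_def, aeval_X] at h
  rw [← h, inv_pow, inv_mul_cancel_right₀ (pow_ne_zero _ X_ne_zero)]

theorem num_mul_reverse_eq_neg_denom_mul_reverse (hσC : ∀ r, σ (C r) = C r)
    (hσ : σ X = X⁻¹) {f : RatFunc K} (hf : f * σ f = -1) :
    f.num * f.num.reverse * Polynomial.X ^ f.denom.natDegree =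
      -(f.denom * f.denom.reverse * Polynomial.X ^ f.num.natDegree) := by
  set p := f.num
  set q := f.denom
  have hq : algebraMap K[X] (RatFunc K) q ≠ 0 := algebraMap_ne_zero f.denom_ne_zero
  have hσq : aeval (X : RatFunc K)⁻¹ q ≠ 0 := by
    rw [← hσ, ← map_algebraMap_of_map_C hσC]
    exact (map_ne_zero σ).2 hq
  have hnorm : algebraMap K[X] (RatFunc K) p * aeval (X : RatFunc K)⁻¹ p =
      -(algebraMap K[X] (RatFunc K) q * aeval (X : RatFunc K)⁻¹ q) := by
    rw [← num_div_denom f, map_div₀, map_algebraMap_of_map_C hσC, map_algebraMap_of_map_C hσC,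
      hσ, div_mul_div_comm, div_eq_iff (mul_ne_zero hq hσq)] at hf
    linear_combination hf
  apply algebraMap_injective K
  simp only [map_mul, map_pow, map_neg, algebraMap_X, ← aeval_X_inv_mul_X_pow_natDegree]
  linear_combination (X : RatFunc K) ^ (p.natDegree + q.natDegree) * hnorm

theorem mul_map_ne_neg_one (hK : ¬IsSquare (-1 : K)) (hσC : ∀ r, σ (C r) = C r)
    (hσ : σ X = X⁻¹) (f : RatFunc K) :
    f * σ f ≠ -1 := by
  intro hf
  have h := congrArg (Polynomial.eval 1) (num_mul_reverse_eq_neg_denom_mul_reverse hσC hσ hf)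
  simp only [Polynomial.eval_mul, Polynomial.eval_pow, Polynomial.eval_X, Polynomial.eval_neg,
    one_pow, mul_one, eval_one_reverse] at h
  have hq : f.denom.eval 1 = 0 :=
    eq_zero_of_sq_eq_neg_sq hK (a := f.num.eval 1) (by linear_combination h)
  have hp : f.num.eval 1 = 0 := mul_self_eq_zero.1 (by simpa [hq] using h)
  have := f.isCoprime_num_denom.map (evalRingHom 1)
  rw [coe_evalRingHom, hp, hq] at this
  exact not_isCoprime_zero_zero this

end RatFunc

/-- For `F = ℚ(t)` with a field automorphism `σ` fixing `ℚ` and with `σ(t) = t⁻¹`,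
`−1` is not of the form `f · σ(f)` for `f ∈ Fˣ`; hence the class of `−1` is a nontrivial
element of order 2 in `Fˣ/N(F)` (its square `(−1)² = 1` trivially lies in `N(F)`). -/
theorem stmt_8 (σ : RatFunc ℚ ≃+* RatFunc ℚ)
    (hσX : σ RatFunc.X = (RatFunc.X)⁻¹)
    (hσC : ∀ r : ℚ, σ (RatFunc.C r) = RatFunc.C r) :
    (∀ f : RatFunc ℚ, f ≠ 0 → f * σ f ≠ -1) ∧
    (∃ f : RatFunc ℚ, f ≠ 0 ∧ (-1 : RatFunc ℚ) ^ 2 = f * σ f) := by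
  have hℚ : ¬IsSquare (-1 : ℚ) := fun h => absurd h.nonneg (by norm_num)
  exact ⟨fun f _ => RatFunc.mul_map_ne_neg_one hℚ hσC hσX f, 1, one_ne_zero, by simp⟩
end

section
/- Let ℓ, m, n be natural numbers with ℓ ≥ m ≥ n ≥ 2. Then 1/m + 1/ℓ = 1/n (as rational numbers) if and only if there exist positive natural numbers a, b, k with a and b relatively prime such that ℓ = b·(a+b)·k, m = a·(a+b)·k, and n = a·b·k. -/
/-- For natural numbers `ℓ ≥ m ≥ n ≥ 2`, one has `1/m + 1/ℓ = 1/n` (in `ℚ`) iff there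
exist positive coprime `a, b` and positive `k` with `ℓ = b(a+b)k`, `m = a(a+b)k`,
`n = abk`. -/
theorem stmt_10 (ℓ m n : ℕ) (h1 : ℓ ≥ m) (h2 : m ≥ n) (h3 : n ≥ 2) :
    (1 / (m : ℚ) + 1 / (ℓ : ℚ) = 1 / (n : ℚ)) ↔
    ∃ a b k : ℕ, 0 < a ∧ 0 < b ∧ 0 < k ∧ Nat.Coprime a b ∧
      ℓ = b * (a + b) * k ∧ m = a * (a + b) * k ∧ n = a * b * k := by
  have hn : 0 < n := by omega
  have hm : 0 < m := by omega
  have hl : 0 < ℓ := by omega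
  have hnQ : (n : ℚ) ≠ 0 := Nat.cast_ne_zero.2 hn.ne'
  have hmQ : (m : ℚ) ≠ 0 := Nat.cast_ne_zero.2 hm.ne'
  have hlQ : (ℓ : ℚ) ≠ 0 := Nat.cast_ne_zero.2 hl.ne'
  constructor
  · intro h
    -- clear denominators
    have key : n * (ℓ + m) = ℓ * m := by
      have : ((n * (ℓ + m) : ℕ) : ℚ) = ((ℓ * m : ℕ) : ℚ) := by
        push_cast
        field_simp at h
        linarith [h]
      exact_mod_cast this
    set g := Nat.gcd ℓ m with hg
    have hgpos : 0 < g := Nat.gcd_pos_of_pos_left m hl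
    set a := m / g with ha
    set b := ℓ / g with hb
    have hmg : m = a * g := (Nat.div_mul_cancel (Nat.gcd_dvd_right ℓ m)).symm
    have hlg : ℓ = b * g := (Nat.div_mul_cancel (Nat.gcd_dvd_left ℓ m)).symm
    have hapos : 0 < a := by
      rcases Nat.eq_zero_or_pos a with h0 | h0
      · simp [h0] at hmg; omega
      · exact h0
    have hbpos : 0 < b := by
      rcases Nat.eq_zero_or_pos b with h0 | h0
      · simp [h0] at hlg; omega
      · exact h0
    have hcop : Nat.Coprime a b := (Nat.coprime_div_gcd_div_gcd hgpos).symm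
    -- n * (a + b) = a * b * g
    have key2 : n * (a + b) = a * b * g := by
      have : n * ((a + b) * g) = (a * b * g) * g := by
        calc n * ((a + b) * g) = n * (ℓ + m) := by rw [hmg, hlg]; ring
        _ = ℓ * m := key
        _ = (a * b * g) * g := by rw [hmg, hlg]; ring
      exact Nat.eq_of_mul_eq_mul_right hgpos (by rw [mul_assoc]; exact this)
    have hcop2 : Nat.Coprime (a + b) (a * b) := by
      have h1 : Nat.Coprime (a + b) a := by
        simpa using (Nat.coprime_add_self_left (m := b) (n := a)).2 hcop.symm
      have h2 : Nat.Coprime (a + b) b := by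
        simpa using (Nat.coprime_add_self_right (m := a) (n := b)).2 hcop
      exact Nat.Coprime.mul_right h1 h2
    have hdvd : (a + b) ∣ g := by
      have : (a + b) ∣ a * b * g := ⟨n, by linarith [key2]⟩
      exact (Nat.Coprime.dvd_of_dvd_mul_left hcop2 this)
    obtain ⟨k, hk⟩ := hdvd
    have hkpos : 0 < k := by
      rcases Nat.eq_zero_or_pos k with h0 | h0
      · simp [h0] at hk; omega
      · exact h0
    refine ⟨a, b, k, hapos, hbpos, hkpos, hcop, ?_, ?_, ?_⟩
    · rw [hlg, hk]; ring
    · rw [hmg, hk]; ring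
    · have habpos : 0 < a + b := by omega
      have : n * (a + b) = (a * b * k) * (a + b) := by rw [key2, hk]; ring
      exact Nat.eq_of_mul_eq_mul_right habpos this
  · rintro ⟨a, b, k, ha, hb, hk, hcop, hL, hM, hN⟩
    subst hL hM hN
    have haQ : (a : ℚ) ≠ 0 := Nat.cast_ne_zero.2 ha.ne'
    have hbQ : (b : ℚ) ≠ 0 := Nat.cast_ne_zero.2 hb.ne'
    have hkQ : (k : ℚ) ≠ 0 := Nat.cast_ne_zero.2 hk.ne'
    have habQ : ((a : ℚ) + b) ≠ 0 := by positivity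
    push_cast
    field_simp
    ring
end
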